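/- Let Γ be a linearly ordered abelian group and v a Γ-valued valuation on a field L. Let G be a finite group acting on L by v-preserving automorphisms, and fix t ∈ L with v(t) = γ. For α ∈ Γ with α > 0, the set G_α = {g ∈ G : v(t^{-1}g(t) − 1) ≥ α} is a subgroup of G, and α ≤ β implies G_β ⊆ G_α. -/

import Mathlib

/-! Since `v(t⁻¹·g(t) - 1) = v(g(t) - t) - v(t)`, the set `G_α` is `{g : v(g(t) - t) ≥ α + γ}`.
Such a set is a subgroup for any threshold: `gh(t) - t = g(h(t) - t) + (g(t) - t)` and
`g⁻¹(t) - t = -g⁻¹(g(t) - t)`, and `g` preserves `v`. -/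

namespace AddValuation

variable {R Γ₀ : Type*} [Ring R] [LinearOrderedAddCommMonoidWithTop Γ₀] (v : AddValuation R Γ₀)
  {G : Type*} [Group G] [DistribMulAction G R]

def displacementSubgroup (hpres : ∀ (g : G) (x : R), v (g • x) = v x) (x : R) (δ : Γ₀) :
    Subgroup G where
  carrier := {g | δ ≤ v (g • x - x)}
  one_mem' := by simp
  mul_mem' {g h} hg hh := by
    have hsplit : (g * h) • x - x = g • (h • x - x) + (g • x - x) := by
      rw [mul_smul, smul_sub]
      abel
    simp only [Set.mem_ofPred_eq, hsplit]
    exact v.map_le_add (by rwa [hpres]) hg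
  inv_mem' {g} hg := by
    have hsplit : g⁻¹ • x - x = -(g⁻¹ • (g • x - x)) := by
      rw [smul_sub, inv_smul_smul]
      abel
    simpa only [Set.mem_ofPred_eq, hsplit, map_neg, hpres] using hg

theorem mem_displacementSubgroup {hpres : ∀ (g : G) (x : R), v (g • x) = v x} {x : R}
    {δ : Γ₀} {g : G} : g ∈ v.displacementSubgroup hpres x δ ↔ δ ≤ v (g • x - x) :=
  Iff.rfl

end AddValuation

theorem AddValuation.le_map_inv_mul_iff {K Γ : Type*} [Field K] [AddCommGroup Γ] [LinearOrder Γ]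
    [IsOrderedAddMonoid Γ] (v : AddValuation K (WithTop Γ)) {t : K} {γ : Γ}
    (ht : v t = (γ : WithTop Γ)) (α : WithTop Γ) (y : K) :
    α ≤ v (t⁻¹ * y) ↔ α + γ ≤ v y := by
  have ht0 : t ≠ 0 := fun h => WithTop.coe_ne_top (by rw [← ht, h, v.map_zero])
  have hy : v y = v (t⁻¹ * y) + γ := by
    rw [← ht, ← v.map_mul, mul_comm, mul_inv_cancel_left₀ ht0]
  rw [hy, WithTop.add_le_add_iff_right WithTop.coe_ne_top]

theorem two_dimensional_ramification_filtration_subgroup_general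
    {Γ : Type*} [AddCommGroup Γ] [LinearOrder Γ] [IsOrderedAddMonoid Γ]
    {L : Type*} [Field L]
    (v : AddValuation L (WithTop Γ))
    {G : Type*} [Group G] [MulSemiringAction G L]
    (hpres : ∀ (g : G) (x : L), v (g • x) = v x)
    (t : L) (γ : Γ) (ht : v t = (γ : WithTop Γ)) :
    (∀ α : Γ, 0 < α → ∃ S : Subgroup G, ∀ g : G,
      g ∈ S ↔ (α : WithTop Γ) ≤ v (t⁻¹ * (g • t) - 1)) ∧
    (∀ α β : Γ, 0 < α → α ≤ β → ∀ g : G,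
      (β : WithTop Γ) ≤ v (t⁻¹ * (g • t) - 1) →
      (α : WithTop Γ) ≤ v (t⁻¹ * (g • t) - 1)) := by
  have ht0 : t ≠ 0 := fun h => WithTop.coe_ne_top (by rw [← ht, h, v.map_zero])
  have hfactor : ∀ g : G, t⁻¹ * (g • t) - 1 = t⁻¹ * (g • t - t) := fun g => by
    rw [mul_sub, inv_mul_cancel₀ ht0]
  refine ⟨fun α _ => ⟨v.displacementSubgroup hpres t ((α : WithTop Γ) + γ), fun g => ?_⟩,
    fun α β _ hαβ g hg => (WithTop.coe_le_coe.mpr hαβ).trans hg⟩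
  rw [AddValuation.mem_displacementSubgroup, hfactor, v.le_map_inv_mul_iff ht]

/-- Let `Γ` be a linearly ordered abelian group and `v` a `Γ`-valued (additive) valuation
on a field `L`.  Let `G` be a finite group acting on `L` by `v`-preserving field
automorphisms, and fix `t ∈ L` with `v(t) = γ` finite.  For `α ∈ Γ` with `α > 0`, the set
`G_α = {g ∈ G : v(t⁻¹·g(t) - 1) ≥ α}` is a subgroup of `G`, and `α ≤ β` implies
`G_β ⊆ G_α`. -/
theorem two_dimensional_ramification_filtration_subgroup
    {Γ : Type*} [AddCommGroup Γ] [LinearOrder Γ] [IsOrderedAddMonoid Γ]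
    {L : Type*} [Field L]
    (v : AddValuation L (WithTop Γ))
    {G : Type*} [Group G] [Finite G] [MulSemiringAction G L]
    (hpres : ∀ (g : G) (x : L), v (g • x) = v x)
    (t : L) (γ : Γ) (ht : v t = (γ : WithTop Γ)) :
    (∀ α : Γ, 0 < α → ∃ S : Subgroup G, ∀ g : G,
      g ∈ S ↔ (α : WithTop Γ) ≤ v (t⁻¹ * (g • t) - 1)) ∧
    (∀ α β : Γ, 0 < α → α ≤ β → ∀ g : G,
      (β : WithTop Γ) ≤ v (t⁻¹ * (g • t) - 1) →
      (α : WithTop Γ) ≤ v (t⁻¹ * (g • t) - 1)) :=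
  two_dimensional_ramification_filtration_subgroup_general v hpres t γ ht
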